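/- arXiv:1902.07334 — 6 statements merged into one kernel-verified Lean document; each statement's English description precedes it below -/
import Mathlib

section
/- Let M = A ⊗ B where A is an m×m matrix and B is an n×n matrix over a field. For any nonnegative integers r₁, r₂, the regular-rigidity satisfies r_M(r₁·n + r₂·m) ≤ r_A(r₁) · r_B(r₂). -/
open Matrix

open scoped Classical in
noncomputable def regRigidity {ι F : Type*} [Fintype ι] [Field F]
    (M : Matrix ι ι F) (r : ℕ) : ℕ :=
  sInf {s : ℕ | ∃ E : Matrix ι ι F,
    (∀ i, (Finset.univ.filter fun j => E i j ≠ 0).card ≤ s) ∧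
    (∀ j, (Finset.univ.filter fun i => E i j ≠ 0).card ≤ s) ∧
    (M - E).rank ≤ r}

/-!
If `A - E_A` has rank at most `r₁` and `B - E_B` has rank at most `r₂`, then take
`E := E_A ⊗ E_B`. Its rows and columns have at most `r_A(r₁) · r_B(r₂)` nonzero entries, and
`A ⊗ B - E_A ⊗ E_B = (A - E_A) ⊗ B + E_A ⊗ (B - E_B)` has rank at most `r₁ n + m r₂`, since the
rank is subadditive and submultiplicative under `⊗`.
-/

open Module TensorProduct
open scoped Kronecker

lemma LinearMap.finrank_range_map_le {F V W V' W' : Type*} [Field F]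
    [AddCommGroup V] [Module F V] [AddCommGroup W] [Module F W]
    [AddCommGroup V'] [Module F V'] [AddCommGroup W'] [Module F W']
    [FiniteDimensional F V'] [FiniteDimensional F W']
    (f : V →ₗ[F] V') (g : W →ₗ[F] W') :
    finrank F (range (TensorProduct.map f g)) ≤ finrank F (range f) * finrank F (range g) := by
  have h_range : range (TensorProduct.map f g) ≤ range (mapIncl (range f) (range g)) := by
    rw [range_map_eq_span_tmul, range_mapIncl, Submodule.map₂_eq_span_image2]
    apply Submodule.span_mono
    rintro _ ⟨a, b, rfl⟩
    exact ⟨f a, ⟨a, rfl⟩, g b, ⟨b, rfl⟩, rfl⟩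
  calc finrank F (range (TensorProduct.map f g))
      ≤ finrank F (range (mapIncl (range f) (range g))) := Submodule.finrank_mono h_range
    _ ≤ finrank F (range f ⊗[F] range g) := finrank_range_le _
    _ = finrank F (range f) * finrank F (range g) := finrank_tensorProduct

namespace Matrix

variable {F : Type*} [Field F] {l m n p : Type*} [Fintype m] [Fintype p]

lemma rank_add_le (M N : Matrix l m F) : (M + N).rank ≤ M.rank + N.rank := by
  have h_range : LinearMap.range (M + N).mulVecLin ≤
      LinearMap.range M.mulVecLin ⊔ LinearMap.range N.mulVecLin := by
    rintro _ ⟨v, rfl⟩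
    rw [mulVecLin_add]
    exact Submodule.add_mem_sup ⟨v, rfl⟩ ⟨v, rfl⟩
  exact (Submodule.finrank_mono h_range).trans (Submodule.finrank_add_le_finrank_add_finrank _ _)

lemma rank_kronecker_le [Fintype l] [Fintype n] (X : Matrix l m F) (Y : Matrix n p F) :
    (X ⊗ₖ Y).rank ≤ X.rank * Y.rank := by
  classical
  rw [rank_eq_finrank_range_toLin (X ⊗ₖ Y) ((Pi.basisFun F l).tensorProduct (Pi.basisFun F n))
      ((Pi.basisFun F m).tensorProduct (Pi.basisFun F p)),
    rank_eq_finrank_range_toLin X (Pi.basisFun F l) (Pi.basisFun F m),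
    rank_eq_finrank_range_toLin Y (Pi.basisFun F n) (Pi.basisFun F p), toLin_kronecker]
  exact LinearMap.finrank_range_map_le _ _

lemma rank_kronecker_sub_kronecker_le [Fintype l] [Fintype n] (A E : Matrix l m F)
    (B E' : Matrix n p F) :
    (A ⊗ₖ B - E ⊗ₖ E').rank ≤ (A - E).rank * B.rank + E.rank * (B - E').rank := by
  have h_split : A ⊗ₖ B - E ⊗ₖ E' = (A - E) ⊗ₖ B + E ⊗ₖ (B - E') := by
    ext ⟨i, k⟩ ⟨j, q⟩
    simp only [sub_apply, add_apply, kronecker_apply]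
    ring
  rw [h_split]
  exact (rank_add_le _ _).trans (add_le_add (rank_kronecker_le _ _) (rank_kronecker_le _ _))

open scoped Classical in
lemma card_filter_kronecker_row_ne_zero_le {R : Type*} [MulZeroClass R] (X : Matrix l m R) (Y : Matrix n p R) (i : l) (k : n) :
    (Finset.univ.filter fun jq => (X ⊗ₖ Y) (i, k) jq ≠ 0).card ≤
      (Finset.univ.filter fun j => X i j ≠ 0).card *
        (Finset.univ.filter fun q => Y k q ≠ 0).card := by
  rw [← Finset.card_product]
  apply Finset.card_le_card
  rintro ⟨j, q⟩ hjq
  simp only [Finset.mem_filter, Finset.mem_univ, true_and, Finset.mem_product,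
    kronecker_apply] at hjq ⊢
  exact ⟨left_ne_zero_of_mul hjq, right_ne_zero_of_mul hjq⟩

end Matrix

open scoped Classical in
lemma exists_sparse_sub_rank_le_of_regRigidity {ι F : Type*} [Fintype ι] [Field F]
    (M : Matrix ι ι F) (r : ℕ) :
    ∃ E : Matrix ι ι F,
      (∀ i, (Finset.univ.filter fun j => E i j ≠ 0).card ≤ regRigidity M r) ∧
      (∀ j, (Finset.univ.filter fun i => E i j ≠ 0).card ≤ regRigidity M r) ∧
      (M - E).rank ≤ r := by
  have h_nonempty : {s : ℕ | ∃ E : Matrix ι ι F,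
      (∀ i, (Finset.univ.filter fun j => E i j ≠ 0).card ≤ s) ∧
      (∀ j, (Finset.univ.filter fun i => E i j ≠ 0).card ≤ s) ∧
      (M - E).rank ≤ r}.Nonempty :=
    ⟨Fintype.card ι, M, fun _ => Finset.card_filter_le _ _, fun _ => Finset.card_filter_le _ _,
      by simp⟩
  exact Nat.sInf_mem h_nonempty

/-- Regular-rigidity of a Kronecker product:
`r_{A ⊗ B}(r₁ n + r₂ m) ≤ r_A(r₁) · r_B(r₂)`. -/
theorem kronecker_regRigidity {F : Type*} [Field F] {m n : ℕ}
    (A : Matrix (Fin m) (Fin m) F) (B : Matrix (Fin n) (Fin n) F) (r₁ r₂ : ℕ) :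
    regRigidity (Matrix.kroneckerMap (· * ·) A B) (r₁ * n + r₂ * m) ≤
      regRigidity A r₁ * regRigidity B r₂ := by
  obtain ⟨EA, hA_row, hA_col, hA_rank⟩ := exists_sparse_sub_rank_le_of_regRigidity A r₁
  obtain ⟨EB, hB_row, hB_col, hB_rank⟩ := exists_sparse_sub_rank_le_of_regRigidity B r₂
  apply Nat.sInf_le
  refine ⟨EA ⊗ₖ EB, fun ⟨i, k⟩ => ?_, fun ⟨j, q⟩ => ?_, ?_⟩
  · exact (card_filter_kronecker_row_ne_zero_le EA EB i k).trans
      (Nat.mul_le_mul (hA_row i) (hB_row k))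
  -- a column of `EA ⊗ EB` is a row of `EAᵀ ⊗ EBᵀ`
  · exact (card_filter_kronecker_row_ne_zero_le EAᵀ EBᵀ j q).trans
      (Nat.mul_le_mul (hA_col j) (hB_col q))
  · calc (A ⊗ₖ B - EA ⊗ₖ EB).rank
        ≤ (A - EA).rank * B.rank + EA.rank * (B - EB).rank :=
          rank_kronecker_sub_kronecker_le A EA B EB
      _ ≤ r₁ * n + m * r₂ := by gcongr <;> exact rank_le_width _
      _ = r₁ * n + r₂ * m := by ring
end

section
/- The rows and columns of the generalized Walsh–Hadamard matrix H_{d,n} can be rescaled by nonzero complex scalars to obtain a matrix of the form M_{I,J} = f(I+J) for some function f : (ℤ/d)^n → ℂ that is symmetric under permutation of coordinates. Specifically, with ζ a complex number satisfying ζ² = ω (ζ itself a 2d-th root of unity when d is even, a d-th root when d is odd), multiplying row I by ζ^{I·I} and column J by ζ^{J·J} yields the matrix with entries ζ^{(I+J)·(I+J)}, and the function x ↦ ζ^{x₁²+⋯+x_n²} is well-defined on (ℤ/d)^n. -/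
open Matrix

/-- The rows and columns of `H_{d,n}` can be rescaled (row `I` by `ζ^{I·I}` and
column `J` by `ζ^{J·J}`, where `ζ² = ω`, with `ζ` a `2d`-th root of unity when
`d` is even and a `d`-th root of unity when `d` is odd) to obtain a matrix of
the form `M_{I,J} = f(I+J)`, where `f(x) = ζ^{x₁²+⋯+xₙ²}` is a well-defined
function on `(ℤ/d)ⁿ` that is symmetric under permutation of coordinates. -/
theorem GWH_rescale_to_groupCirculant (d n : ℕ) [NeZero d] (hd : 2 ≤ d) :
    let ω : ℂ := Complex.exp (2 * Real.pi * Complex.I / d)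
    let H : Matrix (Fin n → ZMod d) (Fin n → ZMod d) ℂ :=
      Matrix.of fun I J => ω ^ (∑ k, (I k).val * (J k).val)
    ∃ ζ : ℂ, ζ ^ 2 = ω ∧ (Even d → ζ ^ (2 * d) = 1) ∧ (Odd d → ζ ^ d = 1) ∧
      ∃ f : (Fin n → ZMod d) → ℂ,
        (∀ x, f x = ζ ^ (∑ k, (x k).val * (x k).val)) ∧
        (∀ (σ : Equiv.Perm (Fin n)) (x : Fin n → ZMod d), f (x ∘ σ) = f x) ∧
        (∀ I J, ζ ^ (∑ k, (I k).val * (I k).val) * H I J *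
            ζ ^ (∑ k, (J k).val * (J k).val) = f (I + J)) := by
  intro ω H
  have hd0 : (d : ℂ) ≠ 0 := Nat.cast_ne_zero.mpr (NeZero.ne d)
  have hωd : ω ^ d = 1 := by
    show Complex.exp _ ^ d = 1
    rw [← Complex.exp_nat_mul]
    have : (d : ℂ) * (2 * Real.pi * Complex.I / d) = 2 * Real.pi * Complex.I := by
      field_simp
    rw [this, Complex.exp_two_pi_mul_I]
  set ζ : ℂ := if Even d then Complex.exp (Real.pi * Complex.I / d)
    else ω ^ ((d + 1) / 2) with hζdef
  have h2 : ζ ^ 2 = ω := by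
    by_cases hp : Even d
    · rw [hζdef, if_pos hp, ← Complex.exp_nat_mul]
      congr 1
      push_cast
      ring
    · rw [hζdef, if_neg hp, ← pow_mul]
      have hodd : Odd d := Nat.odd_iff.mpr (Nat.not_even_iff.mp hp)
      have : (d + 1) / 2 * 2 = d + 1 := by
        obtain ⟨m, rfl⟩ := hodd
        omega
      rw [this, pow_succ, hωd, one_mul]
  have heven : Even d → ζ ^ (2 * d) = 1 := by
    intro hp
    rw [hζdef, if_pos hp, ← Complex.exp_nat_mul]
    have : ((2 * d : ℕ) : ℂ) * (Real.pi * Complex.I / d) = 2 * Real.pi * Complex.I := by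
      push_cast; field_simp
    rw [this, Complex.exp_two_pi_mul_I]
  have hoddζ : Odd d → ζ ^ d = 1 := by
    intro hodd
    rw [hζdef, if_neg (Nat.not_even_iff_odd.mpr hodd), ← pow_mul, mul_comm, pow_mul, hωd, one_pow]
  have h2d : ζ ^ (2 * d) = 1 := by
    by_cases hp : Even d
    · exact heven hp
    · rw [pow_mul', hoddζ (Nat.odd_iff.mpr (Nat.not_even_iff.mp hp)), one_pow]
  have hd2 : ζ ^ (d * d) = 1 := by
    by_cases hp : Even d
    · have hp' := hp
      obtain ⟨m, hm⟩ := hp'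
      have : d * d = 2 * d * m := by rw [hm]; ring
      rw [this, pow_mul, heven hp, one_pow]
    · rw [pow_mul, hoddζ (Nat.odd_iff.mpr (Nat.not_even_iff.mp hp)), one_pow]
  -- key: ζ ^ ((a % d)^2) = ζ ^ (a^2)
  have key : ∀ a : ℕ, ζ ^ (a % d * (a % d)) = ζ ^ (a * a) := by
    intro a
    conv_rhs => rw [← Nat.mod_add_div a d]
    set r := a % d
    set q := a / d
    have : (r + d * q) * (r + d * q) = r * r + (2 * d) * (r * q) + (d * d) * (q * q) := by ring
    rw [this, pow_add, pow_add, pow_mul ζ (2 * d), pow_mul ζ (d * d), h2d, hd2,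
      one_pow, one_pow, mul_one, mul_one]
  refine ⟨ζ, h2, heven, hoddζ, fun x => ζ ^ (∑ k, (x k).val * (x k).val),
    fun x => rfl, ?_, ?_⟩
  · intro σ x
    show ζ ^ (∑ k, (x (σ k)).val * (x (σ k)).val) = ζ ^ (∑ k, (x k).val * (x k).val)
    rw [Equiv.sum_comp σ (fun k => (x k).val * (x k).val)]
  · intro I J
    have hH : H I J = ζ ^ (2 * ∑ k, (I k).val * (J k).val) := by
      show ω ^ _ = _
      rw [← h2, ← pow_mul]
    rw [hH, ← pow_add, ← pow_add]
    have hsum : (∑ k, (I k).val * (I k).val) + 2 * (∑ k, (I k).val * (J k).val)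
        + (∑ k, (J k).val * (J k).val)
        = ∑ k, ((I k).val + (J k).val) * ((I k).val + (J k).val) := by
      rw [Finset.mul_sum, ← Finset.sum_add_distrib, ← Finset.sum_add_distrib]
      exact Finset.sum_congr rfl fun k _ => by ring
    rw [hsum]
    show _ = ζ ^ (∑ k, ((I + J) k).val * ((I + J) k).val)
    rw [← Finset.prod_pow_eq_pow_sum, ← Finset.prod_pow_eq_pow_sum]
    refine Finset.prod_congr rfl fun k _ => ?_
    have : ((I + J) k).val = ((I k).val + (J k).val) % d := by
      simp [Pi.add_apply, ZMod.val_add]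
    rw [this, key]
end

section
/- Let n = x₁x₂⋯x_j where x₁,…,x_j are pairwise relatively prime positive integers. Then there is a permutation of the rows and columns of the n×n DFT matrix DFT_n that equals the Kronecker product DFT_{x₁} ⊗ ⋯ ⊗ DFT_{x_j}. -/
/-!
Write `N = ∏ xᵢ` and `cᵢ = N / xᵢ`, and identify `Fin N` with `ZMod N` and the tuples with
`∏ ZMod xᵢ` through the Chinese remainder theorem. The `(r, s)` entry of `DFT_N` is
`ψ_N (r s)`, where `ψ_N t = e^{2πi t / N}` is the standard additive character of `ZMod N`.
Index the rows by `a ↦ CRT⁻¹(a)` and the columns by `b ↦ CRT⁻¹(c b)`; the latter is a bijection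
because `cᵢ` is a unit modulo `xᵢ`. Then `r s = CRT⁻¹(cᵢ aᵢ bᵢ)ᵢ = ∑ cᵢ aᵢ bᵢ` in `ZMod N`, and
`ψ_N (cᵢ t) = ψ_{xᵢ} t`, so the entry factors as `∏ ψ_{xᵢ}(aᵢ bᵢ)`.
-/

open Matrix

/-- The `m × m` DFT matrix, with `(x,y)` entry `e^{2πi·xy/m}`. -/
noncomputable def DFTN (m : ℕ) : Matrix (Fin m) (Fin m) ℂ :=
  Matrix.of fun x y =>
    Complex.exp (2 * Real.pi * Complex.I * (x : ℕ) * (y : ℕ) / m)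

open Finset Function

lemma ZMod.finEquiv_apply (n : ℕ) [NeZero n] (k : Fin n) : ZMod.finEquiv n k = (k : ℕ) := by
  obtain ⟨m, rfl⟩ := Nat.exists_eq_succ_of_ne_zero (NeZero.ne n)
  exact (Fin.cast_val_eq_self k).symm

lemma ZMod.stdAddChar_natCast {N : ℕ} [NeZero N] (j : ℕ) :
    stdAddChar (j : ZMod N) = Complex.exp (2 * Real.pi * Complex.I * j / N) := by
  simpa using stdAddChar_coe (N := N) j

lemma DFTN_apply (m : ℕ) [NeZero m] (k l : Fin m) :
    DFTN m k l = ZMod.stdAddChar (ZMod.finEquiv m k * ZMod.finEquiv m l) := by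
  rw [ZMod.finEquiv_apply, ZMod.finEquiv_apply, ← Nat.cast_mul, ZMod.stdAddChar_natCast, DFTN,
    of_apply, Nat.cast_mul, mul_assoc _ (k : ℂ)]

lemma ZMod.stdAddChar_natCast_mul_of_mul_eq {x c N : ℕ} [NeZero x] [NeZero N] (hN : x * c = N) (t : ℕ) :
    stdAddChar ((c : ZMod N) * (t : ZMod N)) = stdAddChar (t : ZMod x) := by
  have hc : (c : ℂ) ≠ 0 := by exact_mod_cast right_ne_zero_of_mul (hN ▸ NeZero.ne N)
  have hx : (x : ℂ) ≠ 0 := Nat.cast_ne_zero.mpr (NeZero.ne x)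
  rw [← Nat.cast_mul, stdAddChar_natCast, stdAddChar_natCast, ← hN]
  congr 1
  push_cast
  field_simp

lemma AddChar.map_sum_eq_prod {ι A M : Type*} [AddCommMonoid A] [CommMonoid M]
    (ψ : AddChar A M) (s : Finset ι) (f : ι → A) : ψ (∑ i ∈ s, f i) = ∏ i ∈ s, ψ (f i) := by
  classical
  induction s using Finset.induction_on with
  | empty => simp
  | insert i s hi ih => rw [sum_insert hi, prod_insert hi, map_add_eq_mul, ih]

instance Nat.neZero_prod {ι : Type*} [Fintype ι] (x : ι → ℕ) [∀ i, NeZero (x i)] :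
    NeZero (∏ i, x i) :=
  ⟨prod_ne_zero_iff.mpr fun i _ => NeZero.ne (x i)⟩

section Cofactor

variable {ι : Type*} [Fintype ι] [DecidableEq ι] (x : ι → ℕ)

def cofactor (i : ι) : ℕ := ∏ j ∈ univ.erase i, x j

lemma mul_cofactor (i : ι) : x i * cofactor x i = ∏ j, x j :=
  mul_prod_erase _ _ (mem_univ i)

lemma dvd_cofactor {i k : ι} (h : i ≠ k) : x k ∣ cofactor x i :=
  dvd_prod_of_mem x (mem_erase.mpr ⟨h.symm, mem_univ k⟩)

lemma coprime_cofactor (hx : Pairwise (Nat.Coprime on x)) (i : ι) :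
    Nat.Coprime (cofactor x i) (x i) :=
  Nat.Coprime.prod_left fun _ hj => hx (ne_of_mem_erase hj)

lemma ZMod.prodEquivPi_symm_cofactor_mul [∀ i, NeZero (x i)] (hx : Pairwise (Nat.Coprime on x))
    (y : ∀ i, ZMod (x i)) :
    (ZMod.prodEquivPi x hx).symm (fun i => (cofactor x i : ZMod (x i)) * y i)
      = ∑ i, (cofactor x i : ZMod (∏ j, x j)) * (y i).val := by
  rw [RingEquiv.symm_apply_eq]
  funext k
  simp only [ZMod.prodEquivPi_apply, map_sum, map_mul, map_natCast]
  rw [sum_eq_single k]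
  · rw [ZMod.natCast_zmod_val]
  · intro i _ hik
    rw [(ZMod.natCast_eq_zero_iff _ _).mpr (dvd_cofactor x hik), zero_mul]
  · exact absurd (mem_univ k)

lemma ZMod.stdAddChar_prodEquivPi_symm_cofactor_mul [∀ i, NeZero (x i)]
    (hx : Pairwise (Nat.Coprime on x)) (y : ∀ i, ZMod (x i)) :
    stdAddChar ((ZMod.prodEquivPi x hx).symm (fun i => (cofactor x i : ZMod (x i)) * y i))
      = ∏ i, stdAddChar (y i) := by
  rw [prodEquivPi_symm_cofactor_mul, AddChar.map_sum_eq_prod]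
  refine prod_congr rfl fun i _ => ?_
  rw [stdAddChar_natCast_mul_of_mul_eq (mul_cofactor x i), natCast_zmod_val]

end Cofactor

/-- If `n = x₁ ⋯ x_j` with the `xᵢ` pairwise relatively prime, then some
permutation of the rows and columns of `DFT_n` equals the Kronecker product
`DFT_{x₁} ⊗ ⋯ ⊗ DFT_{x_j}` (written here with rows and columns indexed by
tuples, the entry being the product of the entries of the factors). -/
theorem DFT_coprime_factorization (j n : ℕ) (x : Fin j → ℕ)
    (hpos : ∀ i, 0 < x i)
    (hcop : ∀ i i', i ≠ i' → Nat.Coprime (x i) (x i'))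
    (hn : n = ∏ i, x i) :
    ∃ eR eC : (∀ i, Fin (x i)) ≃ Fin n,
      ∀ a b : ∀ i, Fin (x i),
        DFTN n (eR a) (eC b) = ∏ i, DFTN (x i) (a i) (b i) := by
  subst hn
  have : ∀ i, NeZero (x i) := fun i => ⟨(hpos i).ne'⟩
  have hx : Pairwise (Nat.Coprime on x) := fun i i' => hcop i i'
  let φ := ZMod.prodEquivPi x hx
  let toZMod : (∀ i, Fin (x i)) ≃ ∀ i, ZMod (x i) :=
    .piCongrRight fun i => (ZMod.finEquiv (x i)).toEquiv
  let scale : (∀ i, ZMod (x i)) ≃ ∀ i, ZMod (x i) :=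
    .piCongrRight fun i => Units.mulLeft (ZMod.unitOfCoprime _ (coprime_cofactor x hx i))
  let ofZMod : (∀ i, ZMod (x i)) ≃ Fin (∏ i, x i) :=
    φ.symm.toEquiv.trans (ZMod.finEquiv _).symm.toEquiv
  refine ⟨toZMod.trans ofZMod, (toZMod.trans scale).trans ofZMod, fun a b => ?_⟩
  have hprod : φ.symm (toZMod a) * φ.symm (scale (toZMod b))
      = φ.symm fun i => (cofactor x i : ZMod (x i)) * (toZMod a i * toZMod b i) := by
    rw [← map_mul]
    congr 1
    funext i
    exact mul_left_comm _ _ _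
  simp only [DFTN_apply, Equiv.trans_apply, ofZMod, RingEquiv.toEquiv_eq_coe,
    RingEquiv.coe_toEquiv, RingEquiv.apply_symm_apply]
  rw [hprod, ZMod.stdAddChar_prodEquivPi_symm_cofactor_mul]
  rfl
end

section
/- Let 𝔽 be a field and A an n×n matrix over 𝔽 such that there is a set S ⊆ [n]×[n] containing at most s positions in each row and each column, and a matrix E with all nonzero entries in positions of S, with rank(A − E) ≤ r. Suppose every circulant matrix built from a vector x (the matrix M with M_{ij} = x_{i+j}) satisfies M = A* D_x A for diagonal D_x depending linearly on x. Then for every such circulant M, there is a matrix E_M with all nonzero entries in a fixed set of at most s² positions per row and column (independent of x) and rank(M − E_M) ≤ 2r, and the entries of E_M are fixed linear functions of x. -/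
open Matrix
open scoped Classical

lemma my_rank_add_le {F : Type*} [Field F] {m n : Type*} [Fintype m] [Fintype n]
    (A B : Matrix m n F) : (A + B).rank ≤ A.rank + B.rank := by
  classical
  have hrange : LinearMap.range (A + B).mulVecLin ≤
      LinearMap.range A.mulVecLin ⊔ LinearMap.range B.mulVecLin := by
    rintro y ⟨x, rfl⟩
    exact Submodule.mem_sup.2 ⟨A.mulVecLin x, ⟨x, rfl⟩, B.mulVecLin x, ⟨x, rfl⟩, by
      simp [Matrix.add_mulVec, Matrix.mulVecLin]⟩
  calc (A + B).rank ≤ Module.finrank F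
        (LinearMap.range A.mulVecLin ⊔ LinearMap.range B.mulVecLin : Submodule F (m → F)) :=
        Submodule.finrank_mono hrange
    _ ≤ A.rank + B.rank := Submodule.finrank_add_le_finrank_add_finrank _ _

/-- Structured diagonalization lemma: if `A − E` has rank `≤ r` with the
nonzero entries of `E` inside a set `S` with at most `s` positions per row and
column, and every circulant matrix `M_x` (with `(M_x)_{ij} = x_{i+j}`) can be
written as `Aᵀ D_x A` for diagonal `D_x` depending linearly on `x`, then there
is a fixed set `T` with at most `s²` positions per row and column and a linear
map `x ↦ E_M(x)`, supported on `T`, with `rank(M_x − E_M(x)) ≤ 2r` for all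
`x`. -/
theorem structured_diagonalization_rigidity {F : Type*} [Field F]
    {n : ℕ} [NeZero n] {r s : ℕ}
    (A : Matrix (ZMod n) (ZMod n) F)
    (S : Finset (ZMod n × ZMod n))
    (hSr : ∀ i : ZMod n, (S.filter fun p => p.1 = i).card ≤ s)
    (hSc : ∀ j : ZMod n, (S.filter fun p => p.2 = j).card ≤ s)
    (E : Matrix (ZMod n) (ZMod n) F)
    (hE : ∀ p : ZMod n × ZMod n, E p.1 p.2 ≠ 0 → p ∈ S)
    (hrank : (A - E).rank ≤ r)
    (D : (ZMod n → F) →ₗ[F] (ZMod n → F))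
    (hdiag : ∀ x : ZMod n → F,
      (Matrix.of fun i j : ZMod n => x (i + j)) =
        Aᵀ * Matrix.diagonal (D x) * A) :
    ∃ T : Finset (ZMod n × ZMod n),
      (∀ i : ZMod n, (T.filter fun p => p.1 = i).card ≤ s ^ 2) ∧
      (∀ j : ZMod n, (T.filter fun p => p.2 = j).card ≤ s ^ 2) ∧
      ∃ EM : (ZMod n → F) →ₗ[F] Matrix (ZMod n) (ZMod n) F,
        ∀ x : ZMod n → F,
          (∀ p : ZMod n × ZMod n, EM x p.1 p.2 ≠ 0 → p ∈ T) ∧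
          ((Matrix.of fun i j : ZMod n => x (i + j)) - EM x).rank ≤ 2 * r := by
  classical
  refine ⟨Finset.univ.filter (fun p => ∃ k : ZMod n, (k, p.1) ∈ S ∧ (k, p.2) ∈ S),
    ?_, ?_, ?_⟩
  · -- row bound
    intro i
    have hsub : ((Finset.univ.filter
          (fun p : ZMod n × ZMod n => ∃ k : ZMod n, (k, p.1) ∈ S ∧ (k, p.2) ∈ S)).filter
            fun p => p.1 = i) ⊆
        (S.filter fun q => q.2 = i).biUnion
          (fun q => (S.filter fun q' => q'.1 = q.1).image fun q' => (i, q'.2)) := by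
      intro p hp
      simp only [Finset.mem_filter, Finset.mem_univ, true_and] at hp
      obtain ⟨⟨k, hk1, hk2⟩, hpi⟩ := hp
      refine Finset.mem_biUnion.2 ⟨(k, p.1), ?_, ?_⟩
      · exact Finset.mem_filter.2 ⟨hk1, hpi⟩
      · refine Finset.mem_image.2 ⟨(k, p.2), ?_, by simp [← hpi]⟩
        simp [Finset.mem_filter, hk2]
    calc _ ≤ _ := Finset.card_le_card hsub
      _ ≤ ∑ q ∈ S.filter fun q => q.2 = i,
            ((S.filter fun q' => q'.1 = q.1).image fun q' => (i, q'.2)).card :=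
          Finset.card_biUnion_le
      _ ≤ ∑ q ∈ S.filter fun q => q.2 = i, s := by
          refine Finset.sum_le_sum fun q _ => ?_
          exact (Finset.card_image_le).trans (hSr q.1)
      _ ≤ s * s := by
          rw [Finset.sum_const, smul_eq_mul]
          exact Nat.mul_le_mul_right _ (hSc i)
      _ = s ^ 2 := (sq s).symm
  · -- column bound
    intro j
    have hsub : ((Finset.univ.filter
          (fun p : ZMod n × ZMod n => ∃ k : ZMod n, (k, p.1) ∈ S ∧ (k, p.2) ∈ S)).filter
            fun p => p.2 = j) ⊆
        (S.filter fun q => q.2 = j).biUnion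
          (fun q => (S.filter fun q' => q'.1 = q.1).image fun q' => (q'.2, j)) := by
      intro p hp
      simp only [Finset.mem_filter, Finset.mem_univ, true_and] at hp
      obtain ⟨⟨k, hk1, hk2⟩, hpj⟩ := hp
      refine Finset.mem_biUnion.2 ⟨(k, p.2), ?_, ?_⟩
      · exact Finset.mem_filter.2 ⟨hk2, hpj⟩
      · refine Finset.mem_image.2 ⟨(k, p.1), ?_, by simp [← hpj]⟩
        simp [Finset.mem_filter, hk1]
    calc _ ≤ _ := Finset.card_le_card hsub
      _ ≤ ∑ q ∈ S.filter fun q => q.2 = j,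
            ((S.filter fun q' => q'.1 = q.1).image fun q' => (q'.2, j)).card :=
          Finset.card_biUnion_le
      _ ≤ ∑ q ∈ S.filter fun q => q.2 = j, s := by
          refine Finset.sum_le_sum fun q _ => ?_
          exact (Finset.card_image_le).trans (hSr q.1)
      _ ≤ s * s := by
          rw [Finset.sum_const, smul_eq_mul]
          exact Nat.mul_le_mul_right _ (hSc j)
      _ = s ^ 2 := (sq s).symm
  · -- the linear map and rank bound
    refine ⟨{ toFun := fun x => Eᵀ * Matrix.diagonal (D x) * E
              map_add' := fun x y => by
                show Eᵀ * Matrix.diagonal (D (x + y)) * E =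
                  Eᵀ * Matrix.diagonal (D x) * E + Eᵀ * Matrix.diagonal (D y) * E
                rw [map_add, show D x + D y = fun i => D x i + D y i from rfl,
                  ← Matrix.diagonal_add, Matrix.mul_add, Matrix.add_mul]
              map_smul' := fun c x => by
                show Eᵀ * Matrix.diagonal (D (c • x)) * E =
                  c • (Eᵀ * Matrix.diagonal (D x) * E)
                rw [_root_.map_smul, Matrix.diagonal_smul, Matrix.mul_smul, Matrix.smul_mul] },
      fun x => ⟨?_, ?_⟩⟩
    · -- support
      intro p hp
      simp only [LinearMap.coe_mk, AddHom.coe_mk] at hp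
      have hentry : (Eᵀ * Matrix.diagonal (D x) * E) p.1 p.2 =
          ∑ k : ZMod n, E k p.1 * (D x k * E k p.2) := by
        rw [Matrix.mul_assoc, Matrix.mul_apply]
        refine Finset.sum_congr rfl fun k _ => ?_
        rw [Matrix.diagonal_mul, Matrix.transpose_apply]
      rw [hentry] at hp
      obtain ⟨k, _, hk⟩ := Finset.exists_ne_zero_of_sum_ne_zero hp
      have h1 : E k p.1 ≠ 0 := fun h => hk (by simp [h])
      have h2 : E k p.2 ≠ 0 := fun h => hk (by simp [h])
      simp only [Finset.mem_filter, Finset.mem_univ, true_and]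
      exact ⟨k, hE (k, p.1) h1, hE (k, p.2) h2⟩
    · -- rank bound
      simp only [LinearMap.coe_mk, AddHom.coe_mk]
      have hsplit : (Matrix.of fun i j : ZMod n => x (i + j)) -
          Eᵀ * Matrix.diagonal (D x) * E =
          Aᵀ * Matrix.diagonal (D x) * (A - E) +
            (A - E)ᵀ * (Matrix.diagonal (D x) * E) := by
        rw [hdiag x]
        simp only [Matrix.mul_sub, Matrix.sub_mul, Matrix.transpose_sub, Matrix.mul_assoc]
        abel
      rw [hsplit]
      have h1 : (Aᵀ * Matrix.diagonal (D x) * (A - E)).rank ≤ r :=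
        (Matrix.rank_mul_le_right _ _).trans hrank
      have h2 : ((A - E)ᵀ * (Matrix.diagonal (D x) * E)).rank ≤ r := by
        refine (Matrix.rank_mul_le_left _ _).trans ?_
        rw [Matrix.rank_transpose]
        exact hrank
      calc _ ≤ _ + _ := my_rank_add_le _ _
        _ ≤ r + r := add_le_add h1 h2
        _ = 2 * r := (two_mul r).symm
end

section
/- Let d, n, m be positive integers with m ≤ n, let ω be a primitive d-th root of unity in ℂ, and fix complex numbers y₁,…,y_m. Let T_m ⊆ (ℤ/d)^n be the set of tuples with at least m entries equal to 0, and let I₁,…,I_k be representatives of the permutation-equivalence classes of T_m. Define P_i(x₁,…,x_n) = Σ_{I ∈ perm(I_i)} x^I, summing over all distinct permutations of I_i. Then every polynomial Q(x_{m+1},…,x_n) that is symmetric in its variables and of degree at most d−1 in each variable can be written as a ℂ-linear combination Σ c_i P_i(y₁,…,y_m, x_{m+1},…,x_n). -/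
/-!
Write `P̂ᵢ` for `Pᵢ` with `y` substituted for the first `m` variables. Substitution only lowers
degrees, so the monomials of `P̂ᵢ` of top degree are exactly the `x^J` with `J` in the class of
`Iᵢ` and vanishing on the first `m` coordinates, each with coefficient `1`. Given `Q`, take any
monomial `x^I` of `Q`: its exponent vanishes on the first `m` coordinates, so `I` lies in the
class of some `Iᵢ`, and permutations of the last `n - m` variables carry `I` to every such `J`,
so all these `x^J` have the same coefficient `a` in `Q`. Hence `Q - a P̂ᵢ` loses all of them and
gains only monomials of smaller degree, at most as many as `P̂ᵢ` has monomials. Thus the weight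
`∑_{u ∈ supp} B ^ |u|` strictly drops for `B` larger than all these counts, and induction on the
weight finishes the proof.
-/

open MvPolynomial Finset

theorem card_fiber_subtype_compl_add {α β : Type*} [Fintype α] [DecidableEq α] [DecidableEq β]
    (s : Finset α) (h : α → β) (v : β) :
    Fintype.card {x : {a // a ∉ s} // h x = v} + #{a ∈ s | h a = v} =
      Fintype.card {a // h a = v} := by
  rw [Fintype.card_congr (Equiv.subtypeSubtypeEquivSubtypeInter _ (fun a => h a = v)),
    Fintype.card_subtype, Fintype.card_subtype,
    ← card_filter_add_card_filter_not (s := {a | h a = v}) (· ∈ s), add_comm]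
  simp only [filter_filter]
  congr 2 <;> ext a <;> simp [and_comm]

theorem exists_perm_fixing_comp_eq {α β : Type*} [Fintype α] [DecidableEq α] [DecidableEq β]
    {f g : α → β} {s : Finset α} (π : Equiv.Perm α) (hπ : f ∘ π = g)
    (hs : ∀ a ∈ s, f a = g a) : ∃ ρ : Equiv.Perm α, f ∘ ρ = g ∧ ∀ a ∈ s, ρ a = a := by
  have hfiber : ∀ v, Fintype.card {x : {a // a ∉ s} // g x = v}
      = Fintype.card {x : {a // a ∉ s} // f x = v} := by
    intro v
    have hall : Fintype.card {a // g a = v} = Fintype.card {a // f a = v} :=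
      Fintype.card_congr (π.subtypeEquiv fun a => by rw [← hπ]; rfl)
    have hs_fiber : #{a ∈ s | g a = v} = #{a ∈ s | f a = v} :=
      congrArg card (filter_congr fun a ha => by rw [hs a ha])
    have hf := card_fiber_subtype_compl_add s f v
    have hg := card_fiber_subtype_compl_add s g v
    omega
  let e := fun v => Fintype.equivOfCardEq (hfiber v)
  refine ⟨Equiv.Perm.ofSubtype (Equiv.ofFiberEquiv e), funext fun a => ?_,
    fun a ha => Equiv.Perm.ofSubtype_apply_of_not_mem _ (not_not.2 ha)⟩
  by_cases ha : a ∈ s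
  · rw [Function.comp_apply, Equiv.Perm.ofSubtype_apply_of_not_mem (p := (· ∉ s)) _ (not_not.2 ha),
      hs a ha]
  · rw [Function.comp_apply, Equiv.Perm.ofSubtype_apply_of_mem (p := (· ∉ s)) _ ha]
    exact Equiv.ofFiberEquiv_map e ⟨a, ha⟩

theorem Finset.sum_pow_lt_pow_of_card_lt {α : Type*} {T : Finset α} {f : α → ℕ} {B D : ℕ}
    (hB : #T < B) (hf : ∀ t ∈ T, f t < D) : ∑ t ∈ T, B ^ f t < B ^ D := by
  obtain rfl | ⟨t₀, ht₀⟩ := T.eq_empty_or_nonempty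
  · simpa using pow_pos (by omega : 0 < B) D
  have hD : D = D - 1 + 1 := by have := hf t₀ ht₀; omega
  calc ∑ t ∈ T, B ^ f t ≤ #T * B ^ (D - 1) :=
        sum_le_card_nsmul _ _ _ fun t ht =>
          Nat.pow_le_pow_right (by omega) (by have := hf t ht; omega)
    _ < B * B ^ (D - 1) := Nat.mul_lt_mul_of_pos_right hB (pow_pos (by omega) _)
    _ = B ^ D := by rw [hD, pow_succ']; rfl

theorem Submodule.le_of_forall_exists_sub_lt {R M : Type*} [Ring R] [AddCommGroup M] [Module R M]
    {V W : Submodule R M} (μ : M → ℕ) (h : ∀ x ∈ W, x ≠ 0 → ∃ y ∈ V ⊓ W, μ (x - y) < μ x) :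
    W ≤ V := by
  intro x hx
  induction hμ : μ x using Nat.strong_induction_on generalizing x with
  | _ N ih =>
    by_cases hx0 : x = 0
    · exact hx0 ▸ V.zero_mem
    obtain ⟨y, ⟨hyV, hyW⟩, hlt⟩ := h x hx hx0
    simpa using V.add_mem (ih _ (hμ ▸ hlt) (W.sub_mem hx hyW) rfl) hyV

namespace MvPolynomial

section Weight

variable {R σ : Type*} [CommSemiring R] [DecidableEq σ]

noncomputable def supportWeight (B : ℕ) (p : MvPolynomial σ R) : ℕ :=
  ∑ u ∈ p.support, B ^ u.degree

theorem supportWeight_lt_of_support_subset {P Q : MvPolynomial σ R} {Z T : Finset (σ →₀ ℕ)}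
    {B : ℕ} {u : σ →₀ ℕ} (hu : u ∈ Z) (hZ : Z ⊆ Q.support) (hT : ∀ t ∈ T, t.degree < u.degree)
    (hB : #T < B) (h : P.support ⊆ Q.support \ Z ∪ T) :
    supportWeight B P < supportWeight B Q := by
  unfold supportWeight
  calc ∑ v ∈ P.support, B ^ v.degree
      ≤ ∑ v ∈ Q.support \ Z ∪ T, B ^ v.degree := sum_le_sum_of_subset h
    _ ≤ ∑ v ∈ Q.support \ Z, B ^ v.degree + ∑ v ∈ T, B ^ v.degree := by
        rw [← sum_union_inter]; exact Nat.le_add_right _ _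
    _ < ∑ v ∈ Q.support \ Z, B ^ v.degree + B ^ u.degree :=
        Nat.add_lt_add_left (sum_pow_lt_pow_of_card_lt hB hT) _
    _ ≤ ∑ v ∈ Q.support \ Z, B ^ v.degree + ∑ v ∈ Z, B ^ v.degree :=
        Nat.add_le_add_left (single_le_sum (f := fun v => B ^ v.degree) (by simp) hu) _
    _ = ∑ v ∈ Q.support, B ^ v.degree := sum_sdiff hZ

end Weight

section Tuples

variable {σ : Type*} [Fintype σ] {d : ℕ}

noncomputable def tupleExp (J : σ → Fin d) : σ →₀ ℕ :=
  Finsupp.equivFunOnFinite.symm fun t => (J t : ℕ)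

@[simp]
theorem tupleExp_apply (J : σ → Fin d) (t : σ) : tupleExp J t = J t := rfl

theorem tupleExp_injective : Function.Injective (tupleExp (σ := σ) (d := d)) := by
  intro J J' h
  funext t
  exact Fin.ext (by simpa using DFunLike.congr_fun h t)

theorem mapDomain_tupleExp (τ : Equiv.Perm σ) (J : σ → Fin d) :
    Finsupp.mapDomain τ (tupleExp J) = tupleExp (J ∘ τ.symm) := by
  ext t
  simp [Finsupp.mapDomain_equiv_apply]

variable [DecidableEq σ]

def tupleOrbit (f : σ → Fin d) : Finset (σ → Fin d) :=
  {J | ∃ τ : Equiv.Perm σ, f ∘ τ = J}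

@[simp]
theorem mem_tupleOrbit {f J : σ → Fin d} : J ∈ tupleOrbit f ↔ ∃ τ : Equiv.Perm σ, f ∘ τ = J := by
  simp [tupleOrbit]

theorem self_mem_tupleOrbit (f : σ → Fin d) : f ∈ tupleOrbit f :=
  mem_tupleOrbit.2 ⟨1, rfl⟩

theorem tupleOrbit_comp (f : σ → Fin d) (τ : Equiv.Perm σ) :
    tupleOrbit (f ∘ τ) = tupleOrbit f := by
  ext J
  simp only [mem_tupleOrbit]
  constructor
  · rintro ⟨ρ, rfl⟩
    exact ⟨τ * ρ, rfl⟩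
  · rintro ⟨ρ, rfl⟩
    exact ⟨τ⁻¹ * ρ, by ext; simp⟩

theorem degree_tupleExp_of_mem_tupleOrbit {f J : σ → Fin d} (h : J ∈ tupleOrbit f) :
    (tupleExp J).degree = (tupleExp f).degree := by
  obtain ⟨τ, rfl⟩ := mem_tupleOrbit.1 h
  simp only [Finsupp.degree_eq_sum, tupleExp_apply]
  exact Equiv.sum_comp τ fun j => (f j : ℕ)

end Tuples

section Specialization

variable {R σ : Type*} [CommRing R]

variable (R) in
def symmetricOutside (S : Finset σ) : Submodule R (MvPolynomial σ R) where
  carrier := {p | ∀ τ : Equiv.Perm σ, (∀ j ∈ S, τ j = j) → rename τ p = p}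
  add_mem' hp hq τ hτ := by rw [map_add, hp τ hτ, hq τ hτ]
  zero_mem' _ _ := map_zero _
  smul_mem' a _ hp τ hτ := by rw [map_smul, hp τ hτ]

variable [DecidableEq σ]

noncomputable def specializeAt (S : Finset σ) (c : σ → R) (j : σ) : MvPolynomial σ R :=
  if j ∈ S then C (c j) else X j

variable {S : Finset σ} {c : σ → R}

theorem rename_aeval_specializeAt {τ : Equiv.Perm σ} (hτ : ∀ j ∈ S, τ j = j)
    (p : MvPolynomial σ R) :
    rename τ (aeval (specializeAt S c) p) = aeval (specializeAt S c) (rename τ p) := by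
  rw [← AlgHom.comp_apply, comp_aeval, aeval_rename]
  congr 2 with j
  by_cases hj : j ∈ S
  · simp [specializeAt, hj, hτ j hj]
  · have hτj : τ j ∉ S := fun h => hj (τ.injective (hτ _ h) ▸ h)
    simp [specializeAt, hj, hτj]

variable [Fintype σ]

theorem aeval_specializeAt_monomial (e : σ →₀ ℕ) :
    aeval (specializeAt S c) (monomial e (1 : R)) =
      monomial (e.filter (· ∉ S)) (∏ j ∈ S, c j ^ e j) := by
  have hfactor : ∀ j, specializeAt S c j ^ e j =
      C (if j ∈ S then c j ^ e j else 1) * X j ^ (e.filter (· ∉ S) j) := by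
    intro j
    by_cases hj : j ∈ S <;> simp [specializeAt, hj]
  rw [aeval_monomial, monomial_eq, Finsupp.prod_fintype _ _ fun _ => pow_zero _,
    Finsupp.prod_fintype _ _ fun _ => pow_zero _]
  simp only [hfactor, prod_mul_distrib, ← map_prod, prod_ite_mem, univ_inter, map_one, one_mul]

theorem coeff_aeval_specializeAt_monomial {e u : σ →₀ ℕ} (h : e.degree ≤ u.degree) :
    coeff u (aeval (specializeAt S c) (monomial e (1 : R))) =
      if (∀ j ∈ S, e j = 0) ∧ e = u then 1 else 0 := by
  rw [aeval_specializeAt_monomial, coeff_monomial]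
  by_cases hS : ∀ j ∈ S, e j = 0
  · have hfilter : e.filter (· ∉ S) = e := by
      ext j
      by_cases hj : j ∈ S <;> simp [hj, hS]
    have hprod : ∏ j ∈ S, c j ^ e j = 1 := prod_eq_one fun j hj => by rw [hS j hj, pow_zero]
    rw [hfilter, hprod]
    exact if_congr (and_iff_right hS).symm rfl rfl
  · push Not at hS
    obtain ⟨j₀, hj₀S, hj₀⟩ := hS
    have hlt : (e.filter (· ∉ S)).degree < e.degree := by
      simp only [Finsupp.degree_eq_sum, Finsupp.filter_apply]
      refine sum_lt_sum (fun j _ => by split_ifs <;> omega) ⟨j₀, mem_univ _, ?_⟩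
      simp [hj₀S]; omega
    rw [if_neg fun heq => by rw [heq] at hlt; omega, if_neg fun h' => hj₀ (h'.1 j₀ hj₀S)]

variable {d : ℕ}

variable (R) in
noncomputable def orbitSum (f : σ → Fin d) : MvPolynomial σ R :=
  ∑ J ∈ tupleOrbit f, monomial (tupleExp J) 1

theorem orbitSum_eq_sum_image (f : σ → Fin d) :
    orbitSum R f = ∑ v ∈ (tupleOrbit f).image tupleExp, monomial v 1 := by
  rw [orbitSum, sum_image fun _ _ _ _ h => tupleExp_injective h]

theorem rename_orbitSum (τ : Equiv.Perm σ) (f : σ → Fin d) :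
    rename τ (orbitSum R f) = orbitSum R f := by
  simp only [orbitSum, map_sum, rename_monomial, mapDomain_tupleExp]
  refine sum_nbij' (· ∘ τ.symm) (· ∘ τ) ?_ ?_ (fun _ _ => by ext; simp) (fun _ _ => by ext; simp)
    fun _ _ => rfl
  · rintro _ h
    obtain ⟨ρ, rfl⟩ := mem_tupleOrbit.1 h
    exact mem_tupleOrbit.2 ⟨ρ * τ⁻¹, rfl⟩
  · rintro _ h
    obtain ⟨ρ, rfl⟩ := mem_tupleOrbit.1 h
    exact mem_tupleOrbit.2 ⟨ρ * τ, rfl⟩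

theorem coeff_tupleExp_eq_of_mem_tupleOrbit {Q : MvPolynomial σ R}
    (hQ : Q ∈ symmetricOutside R S) {I J : σ → Fin d} (hJ : J ∈ tupleOrbit I)
    (hIJ : ∀ j ∈ S, I j = J j) : coeff (tupleExp J) Q = coeff (tupleExp I) Q := by
  obtain ⟨π, hπ⟩ := mem_tupleOrbit.1 hJ
  obtain ⟨ρ, rfl, hρ⟩ := exists_perm_fixing_comp_eq π hπ hIJ
  have hρ' : ∀ j ∈ S, ρ.symm j = j := fun j hj => by rw [Equiv.symm_apply_eq, hρ j hj]
  calc coeff (tupleExp (I ∘ ρ)) Q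
      = coeff (Finsupp.mapDomain ρ.symm (tupleExp I)) (rename ρ.symm Q) := by
        rw [hQ ρ.symm hρ', mapDomain_tupleExp, Equiv.symm_symm]
    _ = coeff (tupleExp I) Q := coeff_rename_mapDomain _ ρ.symm.injective _ _

theorem coeff_aeval_specializeAt_orbitSum {f : σ → Fin d} {u : σ →₀ ℕ}
    (h : (tupleExp f).degree ≤ u.degree) :
    coeff u (aeval (specializeAt S c) (orbitSum R f)) =
      if u ∈ {v ∈ (tupleOrbit f).image tupleExp | ∀ j ∈ S, v j = 0} then 1 else 0 := by
  have hterm : ∀ v ∈ (tupleOrbit f).image tupleExp,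
      coeff u (aeval (specializeAt S c) (monomial v (1 : R))) =
        if (∀ j ∈ S, v j = 0) ∧ v = u then 1 else 0 := by
    intro v hv
    obtain ⟨J, hJ, rfl⟩ := mem_image.1 hv
    exact coeff_aeval_specializeAt_monomial ((degree_tupleExp_of_mem_tupleOrbit hJ).trans_le h)
  rw [orbitSum_eq_sum_image, map_sum, coeff_sum]
  refine (sum_congr rfl hterm).trans ?_
  simp_rw [ite_and]
  rw [← sum_filter, sum_ite_eq']

theorem aeval_specializeAt_orbitSum_mem (f : σ → Fin d) :
    aeval (specializeAt S c) (orbitSum R f) ∈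
      restrictSupport R {u | ∀ j, u j < d ∧ (j ∈ S → u j = 0)} ⊓ symmetricOutside R S := by
  refine Submodule.mem_inf.2
    ⟨?_, fun τ hτ => by rw [rename_aeval_specializeAt hτ, rename_orbitSum]⟩
  rw [orbitSum, map_sum]
  refine Submodule.sum_mem _ fun J _ => ?_
  rw [aeval_specializeAt_monomial, monomial_mem_restrictSupport]
  refine Or.inl fun j => ?_
  by_cases hj : j ∈ S <;> simp [hj, (J j).pos]

theorem supportWeight_sub_smul_lt {Q : MvPolynomial σ R} (hQ : Q ∈ symmetricOutside R S)
    {I : σ → Fin d} (hI : ∀ j ∈ S, (I j : ℕ) = 0) (hIQ : tupleExp I ∈ Q.support) {B : ℕ}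
    (hB : #(aeval (specializeAt S c) (orbitSum R I)).support < B) :
    supportWeight B (Q - coeff (tupleExp I) Q • aeval (specializeAt S c) (orbitSum R I)) <
      supportWeight B Q := by
  set P := aeval (specializeAt S c) (orbitSum R I)
  set a := coeff (tupleExp I) Q
  set Z := {v ∈ (tupleOrbit I).image tupleExp | ∀ j ∈ S, v j = 0}
  have hZdeg : ∀ v ∈ Z, v.degree = (tupleExp I).degree := by
    intro v hv
    obtain ⟨J, hJ, rfl⟩ := mem_image.1 (mem_filter.1 hv).1
    exact degree_tupleExp_of_mem_tupleOrbit hJ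
  have hPZ : ∀ v ∈ Z, coeff v P = 1 := fun v hv => by
    rw [coeff_aeval_specializeAt_orbitSum (hZdeg v hv).ge, if_pos hv]
  have hQZ : ∀ v ∈ Z, coeff v Q = a := by
    intro v hv
    obtain ⟨hvI, hvS⟩ := mem_filter.1 hv
    obtain ⟨J, hJ, rfl⟩ := mem_image.1 hvI
    exact coeff_tupleExp_eq_of_mem_tupleOrbit hQ hJ fun j hj =>
      Fin.ext ((hI j hj).trans (hvS j hj).symm)
  have hIZ : tupleExp I ∈ Z := mem_filter.2 ⟨mem_image_of_mem _ (self_mem_tupleOrbit I), hI⟩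
  refine supportWeight_lt_of_support_subset
    (T := {v ∈ P.support | v.degree < (tupleExp I).degree}) hIZ
    (fun v hv => mem_support_iff.2 (hQZ v hv ▸ mem_support_iff.1 hIQ))
    (fun t ht => (mem_filter.1 ht).2) ((card_filter_le _ _).trans_lt hB) fun v hv => ?_
  rw [mem_support_iff, coeff_sub, coeff_smul, smul_eq_mul] at hv
  by_cases hvZ : v ∈ Z
  · rw [hQZ v hvZ, hPZ v hvZ, mul_one, sub_self] at hv
    exact absurd rfl hv
  by_cases hvQ : coeff v Q = 0
  · have hvP : coeff v P ≠ 0 := fun h => hv (by rw [hvQ, h, mul_zero, sub_zero])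
    refine mem_union_right _ (mem_filter.2 ⟨mem_support_iff.2 hvP, not_le.1 fun hle => hvP ?_⟩)
    rw [coeff_aeval_specializeAt_orbitSum hle, if_neg hvZ]
  · exact mem_union_left _ (mem_sdiff.2 ⟨mem_support_iff.2 hvQ, hvZ⟩)

theorem le_span_aeval_specializeAt_orbitSum {ι : Type*} [Fintype ι] (Irep : ι → σ → Fin d)
    (hcover : ∀ I : σ → Fin d, (∀ j ∈ S, (I j : ℕ) = 0) →
      ∃ (i : ι) (τ : Equiv.Perm σ), I ∘ τ = Irep i) :
    restrictSupport R {u | ∀ j, u j < d ∧ (j ∈ S → u j = 0)} ⊓ symmetricOutside R S ≤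
      Submodule.span R (Set.range fun i => aeval (specializeAt S c) (orbitSum R (Irep i))) := by
  set P := fun i => aeval (specializeAt S c) (orbitSum R (Irep i))
  refine Submodule.le_of_forall_exists_sub_lt (supportWeight (∑ i, #(P i).support + 1))
    fun Q hQ hQ0 => ?_
  obtain ⟨u, hu⟩ := support_nonempty.2 hQ0
  have hu' : ∀ j, u j < d ∧ (j ∈ S → u j = 0) := (Submodule.mem_inf.1 hQ).1 hu
  let I : σ → Fin d := fun j => ⟨u j, (hu' j).1⟩
  have hIu : tupleExp I = u := by ext; rfl
  obtain ⟨i, τ, hτ⟩ := hcover I fun j hj => (hu' j).2 hj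
  have hPi : P i = aeval (specializeAt S c) (orbitSum R I) := by
    simp only [P, ← hτ, orbitSum, tupleOrbit_comp]
  have hB : #(aeval (specializeAt S c) (orbitSum R I)).support < ∑ i, #(P i).support + 1 :=
    hPi ▸ Nat.lt_succ_of_le (single_le_sum (f := fun i => #(P i).support) (by simp) (mem_univ i))
  have hlt := supportWeight_sub_smul_lt (Submodule.mem_inf.1 hQ).2 (fun j hj => (hu' j).2 hj)
    (hIu ▸ hu) hB
  rw [hIu, ← hPi] at hlt
  exact ⟨coeff u Q • P i, Submodule.mem_inf.2
    ⟨Submodule.smul_mem _ _ (Submodule.subset_span ⟨i, rfl⟩),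
      Submodule.smul_mem _ _ (aeval_specializeAt_orbitSum_mem _)⟩, hlt⟩

end Specialization

end MvPolynomial

theorem symmetric_span_general (d n m k : ℕ) (hd : 0 < d) (hm : m ≤ n)
    (y : Fin m → ℂ)
    (Irep : Fin k → (Fin n → Fin d))
    (hcover : ∀ I : Fin n → Fin d,
      m ≤ (Finset.univ.filter fun j => I j = (⟨0, hd⟩ : Fin d)).card →
      ∃ (i : Fin k) (σ : Equiv.Perm (Fin n)), I ∘ σ = Irep i)
    (Q : MvPolynomial (Fin n) ℂ)
    (hQvars : ∀ j : Fin n, (j : ℕ) < m → Q.degreeOf j = 0)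
    (hQsym : ∀ σ : Equiv.Perm (Fin n), (∀ j : Fin n, (j : ℕ) < m → σ j = j) →
      MvPolynomial.rename σ Q = Q)
    (hQdeg : ∀ j : Fin n, Q.degreeOf j ≤ d - 1) :
    ∃ c : Fin k → ℂ,
      Q = ∑ i : Fin k, c i •
        (MvPolynomial.aeval
          (fun j : Fin n => if h : (j : ℕ) < m
            then MvPolynomial.C (y ⟨j, h⟩)
            else MvPolynomial.X j)
          (∑ J ∈ Finset.univ.filter
              (fun J : Fin n → Fin d => ∃ σ : Equiv.Perm (Fin n), Irep i ∘ σ = J),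
            MvPolynomial.monomial
              (Finsupp.equivFunOnFinite.symm fun t : Fin n => ((J t : ℕ)))
              (1 : ℂ))) := by
  set S : Finset (Fin n) := {j | (j : ℕ) < m}
  have hsubst : (fun j : Fin n => if h : (j : ℕ) < m then C (y ⟨j, h⟩) else X j) =
      specializeAt S fun j => if h : (j : ℕ) < m then y ⟨j, h⟩ else 0 := by
    funext j
    by_cases h : (j : ℕ) < m <;> simp [specializeAt, S, h]
  have hcover' : ∀ I : Fin n → Fin d, (∀ j ∈ S, (I j : ℕ) = 0) →
      ∃ (i : Fin k) (τ : Equiv.Perm (Fin n)), I ∘ τ = Irep i := by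
    refine fun I hI => hcover I ?_
    calc m = #S := by simp [S, Fin.card_filter_val_lt, hm]
      _ ≤ _ := card_le_card fun j hj => mem_filter.2 ⟨mem_univ _, Fin.ext (hI j hj)⟩
  have hQsupp : ∀ u ∈ Q.support, ∀ j, u j < d ∧ (j ∈ S → u j = 0) := by
    intro u hu j
    have hle := monomial_le_degreeOf j hu
    refine ⟨by have := hQdeg j; omega, fun hj => ?_⟩
    rwa [hQvars j (by simpa [S] using hj), Nat.le_zero] at hle
  have hQmem : Q ∈ restrictSupport ℂ {u | ∀ j, u j < d ∧ (j ∈ S → u j = 0)} ⊓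
      symmetricOutside ℂ S :=
    Submodule.mem_inf.2 ⟨hQsupp, fun τ hτ => hQsym τ fun j hj => hτ j (by simpa [S] using hj)⟩
  obtain ⟨c, hc⟩ := (Submodule.mem_span_range_iff_exists_fun ℂ).1
    (le_span_aeval_specializeAt_orbitSum Irep hcover' hQmem)
  exact ⟨c, by rw [hsubst]; exact hc.symm⟩

/-- Symmetric polynomial spanning lemma (Lemma 3.1): let `T_m` be the set of
tuples in `(ℤ/d)ⁿ` (entries in `{0,…,d−1}`) with at least `m` zero entries,
and let `I₁,…,I_k` be representatives of its permutation-equivalence classes.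
For `P_i = Σ_{I ∈ perm(I_i)} x^I` and any complex numbers `y₁,…,y_m`, every
polynomial `Q(x_{m+1},…,xₙ)` symmetric in its variables and of degree at most
`d−1` in each variable is a linear combination
`Σ cᵢ Pᵢ(y₁,…,y_m,x_{m+1},…,xₙ)`. -/
theorem symmetric_span (d n m k : ℕ) (hd : 0 < d) (hm : m ≤ n)
    (y : Fin m → ℂ)
    (Irep : Fin k → (Fin n → Fin d))
    (hmem : ∀ i, m ≤ (Finset.univ.filter fun j => Irep i j = (⟨0, hd⟩ : Fin d)).card)
    (hdistinct : ∀ i i' : Fin k,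
      (∃ σ : Equiv.Perm (Fin n), Irep i ∘ σ = Irep i') → i = i')
    (hcover : ∀ I : Fin n → Fin d,
      m ≤ (Finset.univ.filter fun j => I j = (⟨0, hd⟩ : Fin d)).card →
      ∃ (i : Fin k) (σ : Equiv.Perm (Fin n)), I ∘ σ = Irep i)
    (Q : MvPolynomial (Fin n) ℂ)
    (hQvars : ∀ j : Fin n, (j : ℕ) < m → Q.degreeOf j = 0)
    (hQsym : ∀ σ : Equiv.Perm (Fin n), (∀ j : Fin n, (j : ℕ) < m → σ j = j) →
      MvPolynomial.rename σ Q = Q)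
    (hQdeg : ∀ j : Fin n, Q.degreeOf j ≤ d - 1) :
    ∃ c : Fin k → ℂ,
      Q = ∑ i : Fin k, c i •
        (MvPolynomial.aeval
          (fun j : Fin n => if h : (j : ℕ) < m
            then MvPolynomial.C (y ⟨j, h⟩)
            else MvPolynomial.X j)
          (∑ J ∈ Finset.univ.filter
              (fun J : Fin n → Fin d => ∃ σ : Equiv.Perm (Fin n), Irep i ∘ σ = J),
            MvPolynomial.monomial
              (Finsupp.equivFunOnFinite.symm fun t : Fin n => ((J t : ℕ)))
              (1 : ℂ))) :=
  symmetric_span_general d n m k hd hm y Irep hcover Q hQvars hQsym hQdeg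
end

section
/- Let V_n(x₁,…,x_n) be the n×n Vandermonde matrix with rows (x₁^i,…,x_n^i) for 0 ≤ i ≤ n−1, where the generators form a geometric progression x_i = a·b^{i−1} with a, b nonzero field elements such that all required powers of b exist (e.g., over ℂ). Then after multiplying the i-th row by a^{1−i} b^{i(i+1)/2 − 1} and the j-th column by b^{j(j+1)/2}, the resulting matrix M' has entries M'_{ij} = b^{(i+j)(i+j−1)/2}; in particular M' is a Hankel matrix (its entries depend only on i + j). -/
lemma vgr_aux (i j : ℕ) :
    ((i + 1) * (i + 2) / 2 - 1) + (j * i + (j + 1) * (j + 2) / 2) =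
      (i + j + 2) * (i + j + 1) / 2 := by
  obtain ⟨k1, h1⟩ := Nat.even_mul_succ_self (i + 1)
  obtain ⟨k2, h2⟩ := Nat.even_mul_succ_self (j + 1)
  obtain ⟨k3, h3⟩ := Nat.even_mul_succ_self (i + j + 1)
  have h1 : (i + 1) * (i + 2) = k1 + k1 := by rw [← h1]
  have h2 : (j + 1) * (j + 2) = k2 + k2 := by rw [← h2]
  have h3 : (i + j + 1) * (i + j + 2) = k3 + k3 := by rw [← h3]
  have e1 : (i + 1) * (i + 2) / 2 = k1 := by omega
  have e2 : (j + 1) * (j + 2) / 2 = k2 := by omega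
  have e3 : (i + j + 2) * (i + j + 1) / 2 = k3 := by
    rw [mul_comm]; omega
  rw [e1, e2, e3]
  have h1' : (i + 1) * (i + 2) = i * i + 3 * i + 2 := by ring
  have h2' : (j + 1) * (j + 2) = j * j + 3 * j + 2 := by ring
  have h3' : (i + j + 1) * (i + j + 2) =
      i * i + 2 * (i * j) + j * j + 3 * i + 3 * j + 2 := by ring
  rw [h1'] at h1; rw [h2'] at h2; rw [h3'] at h3
  have hji : j * i = i * j := Nat.mul_comm j i
  generalize i * i = A at h1 h3
  generalize i * j = B at h3 hji
  generalize j * j = C at h2 h3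
  omega

/-- Let `V` be the `n × n` Vandermonde matrix with rows `(x₁^i,…,xₙ^i)`,
`0 ≤ i ≤ n−1`, whose generators form a geometric progression `x_j = a·b^{j−1}`
with `a, b ≠ 0`.  Multiplying the `i`-th row by `a^{1−i} b^{i(i+1)/2 − 1}` and
the `j`-th column by `b^{j(j+1)/2}` yields the matrix with entries
`M'_{ij} = b^{(i+j)(i+j−1)/2}`; in particular `M'` is Hankel (its entries
depend only on `i+j`).  (Indices here are `0`-based: the `0`-based index `i`
corresponds to the paper's `i+1`.) -/
theorem vandermonde_geometric_rescale_hankel {F : Type*} [Field F] {n : ℕ}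
    (a b : F) (ha : a ≠ 0) (hb : b ≠ 0) :
    let V : Matrix (Fin n) (Fin n) F :=
      Matrix.of fun i j => (a * b ^ (j : ℕ)) ^ (i : ℕ)
    let rowScale : Fin n → F := fun i =>
      a⁻¹ ^ (i : ℕ) * b ^ (((i : ℕ) + 1) * ((i : ℕ) + 2) / 2 - 1)
    let colScale : Fin n → F := fun j => b ^ (((j : ℕ) + 1) * ((j : ℕ) + 2) / 2)
    let M' : Matrix (Fin n) (Fin n) F :=
      Matrix.of fun i j => rowScale i * V i j * colScale j
    (∀ i j : Fin n,
      M' i j = b ^ ((((i : ℕ) + (j : ℕ) + 2) * ((i : ℕ) + (j : ℕ) + 1)) / 2)) ∧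
    (∀ i j i' j' : Fin n, (i : ℕ) + (j : ℕ) = (i' : ℕ) + (j' : ℕ) →
      M' i j = M' i' j') := by
  intro V rowScale colScale M'
  have key : ∀ i j : Fin n,
      M' i j = b ^ ((((i : ℕ) + (j : ℕ) + 2) * ((i : ℕ) + (j : ℕ) + 1)) / 2) := by
    intro i j
    show a⁻¹ ^ (i : ℕ) * b ^ (((i : ℕ) + 1) * ((i : ℕ) + 2) / 2 - 1) *
        (a * b ^ (j : ℕ)) ^ (i : ℕ) * b ^ (((j : ℕ) + 1) * ((j : ℕ) + 2) / 2) = _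
    rw [mul_pow, ← pow_mul]
    have : a⁻¹ ^ (i : ℕ) * b ^ (((i : ℕ) + 1) * ((i : ℕ) + 2) / 2 - 1) *
        (a ^ (i : ℕ) * b ^ ((j : ℕ) * (i : ℕ))) * b ^ (((j : ℕ) + 1) * ((j : ℕ) + 2) / 2) =
        (a⁻¹ * a) ^ (i : ℕ) *
        (b ^ (((i : ℕ) + 1) * ((i : ℕ) + 2) / 2 - 1) *
          (b ^ ((j : ℕ) * (i : ℕ)) * b ^ (((j : ℕ) + 1) * ((j : ℕ) + 2) / 2))) := by
      rw [mul_pow]; ring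
    rw [this, inv_mul_cancel₀ ha, one_pow, one_mul, ← pow_add, ← pow_add, vgr_aux]
  refine ⟨key, fun i j i' j' hij => ?_⟩
  rw [key i j, key i' j', hij]
end
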